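/- arXiv:1504.02850 — 2 statements merged into one kernel-verified Lean document; each statement's English description precedes it below -/
import Mathlib

section
/- The set 𝔔_nqm of norm quasi-mixing quadratic stochastic operators equals the union over n ≥ 1 of the sets { Q ∈ 𝔔 : sup_{f,g,h∈𝒟} ‖P_f^{[0,n]}(g) − P_f^{[0,n]}(h)‖₁ < 2 }. -/
open MeasureTheory Filter Topology

noncomputable section

/-- The set of densities in `L¹(μ)`. -/
def Density {X : Type*} [MeasurableSpace X] (μ : Measure X) : Set (Lp ℝ 1 μ) :=
  {f | 0 ≤ f ∧ ‖f‖ = 1}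

/-- `Q : L¹ × L¹ → L¹` is a quadratic stochastic operator: bilinear, positivity preserving,
symmetric and `‖Q(f,g)‖₁ = ‖f‖₁ ‖g‖₁` for `f, g ≥ 0`. -/
structure IsQSO {X : Type*} [MeasurableSpace X] (μ : Measure X)
    (Q : Lp ℝ 1 μ → Lp ℝ 1 μ → Lp ℝ 1 μ) : Prop where
  add_left : ∀ f f' g, Q (f + f') g = Q f g + Q f' g
  smul_left : ∀ (c : ℝ) f g, Q (c • f) g = c • Q f g
  add_right : ∀ f g g', Q f (g + g') = Q f g + Q f g'
  smul_right : ∀ (c : ℝ) f g, Q f (c • g) = c • Q f g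
  nonneg : ∀ f g, 0 ≤ f → 0 ≤ g → 0 ≤ Q f g
  symm : ∀ f g, Q f g = Q g f
  norm_mul : ∀ f g, 0 ≤ f → 0 ≤ g → ‖Q f g‖ = ‖f‖ * ‖g‖

/-- The quadratic map `ℚ(f) = Q(f,f)`. -/
def QQ {X : Type*} [MeasurableSpace X] {μ : Measure X}
    (Q : Lp ℝ 1 μ → Lp ℝ 1 μ → Lp ℝ 1 μ) (f : Lp ℝ 1 μ) : Lp ℝ 1 μ := Q f f

/-- The iterates `ℚⁿ`. -/
def Qiter {X : Type*} [MeasurableSpace X] {μ : Measure X}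
    (Q : Lp ℝ 1 μ → Lp ℝ 1 μ → Lp ℝ 1 μ) (n : ℕ) : Lp ℝ 1 μ → Lp ℝ 1 μ := (QQ Q)^[n]

/-- `Pchain Q f n = P_f^{[0,n]}`, the nonhomogeneous Markov chain associated with `Q`
and the density `f`, i.e. `P_f^{[0,0]} = id` and
`P_f^{[0,n+1]}(g) = Q(ℚⁿ(f), P_f^{[0,n]}(g))`. -/
def Pchain {X : Type*} [MeasurableSpace X] {μ : Measure X}
    (Q : Lp ℝ 1 μ → Lp ℝ 1 μ → Lp ℝ 1 μ) (f : Lp ℝ 1 μ) :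
    ℕ → Lp ℝ 1 μ → Lp ℝ 1 μ
  | 0 => id
  | n + 1 => fun g => Q (Qiter Q n f) (Pchain Q f n g)

/-- The metric `d_u(Q₁,Q₂) = sup_{f ∈ 𝒟} ‖ℚ₁(f) - ℚ₂(f)‖₁`. -/
def du {X : Type*} [MeasurableSpace X] (μ : Measure X)
    (Q₁ Q₂ : Lp ℝ 1 μ → Lp ℝ 1 μ → Lp ℝ 1 μ) : ℝ :=
  ⨆ f : Density μ, ‖Q₁ f f - Q₂ f f‖

/-- The metric `d̂_u(Q₁,Q₂) = sup_{f,g ∈ 𝒟} ‖Q₁(f,g) - Q₂(f,g)‖₁`. -/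
def dhat {X : Type*} [MeasurableSpace X] (μ : Measure X)
    (Q₁ Q₂ : Lp ℝ 1 μ → Lp ℝ 1 μ → Lp ℝ 1 μ) : ℝ :=
  ⨆ f : Density μ, ⨆ g : Density μ, ‖Q₁ f g - Q₂ f g‖

/-- `supDiff μ Q n = sup_{f,g,h ∈ 𝒟} ‖P_f^{[0,n]}(g) - P_f^{[0,n]}(h)‖₁`. -/
def supDiff {X : Type*} [MeasurableSpace X] (μ : Measure X)
    (Q : Lp ℝ 1 μ → Lp ℝ 1 μ → Lp ℝ 1 μ) (n : ℕ) : ℝ :=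
  ⨆ f : Density μ, ⨆ g : Density μ, ⨆ h : Density μ,
    ‖Pchain Q f n g - Pchain Q f n h‖

/-- `Q` is norm quasi-mixing. -/
def NormQuasiMixing {X : Type*} [MeasurableSpace X] (μ : Measure X)
    (Q : Lp ℝ 1 μ → Lp ℝ 1 μ → Lp ℝ 1 μ) : Prop :=
  Tendsto (fun n => supDiff μ Q n) atTop (𝓝 0)

/-- `Q` is norm mixing (uniformly asymptotically stable). -/
def NormMixing {X : Type*} [MeasurableSpace X] (μ : Measure X)
    (Q : Lp ℝ 1 μ → Lp ℝ 1 μ → Lp ℝ 1 μ) : Prop :=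
  ∃ f ∈ Density μ,
    Tendsto (fun n => ⨆ g : Density μ, ‖Qiter Q n g - f‖) atTop (𝓝 0)

end


/-!
Let `δₙ` be half of `supDiff μ Q n`, the Dobrushin coefficient of the chains `P_f^{[0,n]}`.
The difference of two densities `g, h` is `‖g - h‖₁ / 2` times the difference of the two densities
obtained by normalizing `(g - h)⁺` and `(g - h)⁻`, so a linear map sending any two densities to
within `δ` of each other contracts `‖g - h‖₁` by the factor `δ / 2`. Since `P_f^{[0,a+b]}` is
`P_f^{[0,a]}` followed by the chain of `ℚᵃ(f)` over `b` steps, `δ_{a+b} ≤ δ_a δ_b`; together with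
`δ ≤ 1` this forces geometric decay as soon as a single `δₙ` is below `1`.
-/

open MeasureTheory Filter Topology

section Density

variable {X : Type*} [MeasurableSpace X] {μ : Measure X}

lemma L1.norm_eq_integral_of_nonneg {v : Lp ℝ 1 μ} (hv : 0 ≤ v) : ‖v‖ = ∫ x, v x ∂μ := by
  rw [L1.norm_eq_integral_norm]
  refine integral_congr_ae ?_
  filter_upwards [(Lp.coeFn_nonneg v).mpr hv] with x hx
  exact Real.norm_of_nonneg hx

lemma L1.norm_add_of_nonneg {a b : Lp ℝ 1 μ} (ha : 0 ≤ a) (hb : 0 ≤ b) :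
    ‖a + b‖ = ‖a‖ + ‖b‖ := by
  rw [L1.norm_eq_integral_of_nonneg (add_nonneg ha hb), L1.norm_eq_integral_of_nonneg ha,
    L1.norm_eq_integral_of_nonneg hb, integral_congr_ae (Lp.coeFn_add a b)]
  exact integral_add (L1.integrable_coeFn a) (L1.integrable_coeFn b)

lemma L1.norm_eq_norm_posPart_add_norm_negPart (u : Lp ℝ 1 μ) : ‖u‖ = ‖u⁺‖ + ‖u⁻‖ := by
  rw [← L1.norm_add_of_nonneg (posPart_nonneg u) (negPart_nonneg u), posPart_add_negPart,
    norm_abs_eq_norm]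

lemma L1.norm_posPart_sub_eq_norm_negPart_sub {g h : Lp ℝ 1 μ} (hg : 0 ≤ g) (hh : 0 ≤ h)
    (hgh : ‖g‖ = ‖h‖) : ‖(g - h)⁺‖ = ‖(g - h)⁻‖ := by
  have hsum : g + (g - h)⁻ = (g - h)⁺ + h :=
    sub_eq_sub_iff_add_eq_add.mp (posPart_sub_negPart _).symm
  have hnorm := congrArg norm hsum
  rw [L1.norm_add_of_nonneg hg (negPart_nonneg _), L1.norm_add_of_nonneg (posPart_nonneg _) hh,
    hgh] at hnorm
  linarith

lemma Lp.smul_nonneg {p : ENNReal} {c : ℝ} {v : Lp ℝ p μ} (hc : 0 ≤ c) (hv : 0 ≤ v) :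
    0 ≤ c • v := by
  rw [← Lp.coeFn_nonneg]
  filter_upwards [Lp.coeFn_smul c v, (Lp.coeFn_nonneg v).mpr hv] with x hcv hvx
  rw [hcv]
  exact mul_nonneg hc hvx

lemma inv_norm_smul_mem_density {v : Lp ℝ 1 μ} (hv : 0 ≤ v) (hv0 : v ≠ 0) :
    ‖v‖⁻¹ • v ∈ Density μ :=
  ⟨Lp.smul_nonneg (inv_nonneg.mpr (norm_nonneg v)) hv, by
    rw [norm_smul, norm_inv, norm_norm, inv_mul_cancel₀ (norm_ne_zero_iff.mpr hv0)]⟩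

lemma norm_sub_le_two_of_mem_density {g h : Lp ℝ 1 μ} (hg : g ∈ Density μ)
    (hh : h ∈ Density μ) : ‖g - h‖ ≤ 2 := by
  linarith [norm_sub_le g h, hg.2, hh.2]

/-- Dobrushin's contraction estimate. -/
lemma norm_map_sub_le_of_mem_density {E : Type*} [SeminormedAddCommGroup E] [NormedSpace ℝ E]
    (T : Lp ℝ 1 μ →ₗ[ℝ] E) {δ : ℝ}
    (hT : ∀ p ∈ Density μ, ∀ q ∈ Density μ, ‖T p - T q‖ ≤ δ)
    {g h : Lp ℝ 1 μ} (hg : g ∈ Density μ) (hh : h ∈ Density μ) :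
    ‖T g - T h‖ ≤ δ / 2 * ‖g - h‖ := by
  set u := g - h
  have hpn : ‖u⁺‖ = ‖u⁻‖ :=
    L1.norm_posPart_sub_eq_norm_negPart_sub hg.1 hh.1 (hg.2.trans hh.2.symm)
  have hu : ‖u‖ = 2 * ‖u⁺‖ := by
    rw [L1.norm_eq_norm_posPart_add_norm_negPart, ← hpn]; ring
  rcases eq_or_ne u⁺ 0 with hu0 | hu0
  · have hu' : u = 0 := norm_eq_zero.mp (by rw [hu, hu0, norm_zero, mul_zero])
    rw [← map_sub]
    change ‖T u‖ ≤ _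
    simp [hu']
  have hc : ‖u⁺‖ ≠ 0 := norm_ne_zero_iff.mpr hu0
  have hu0' : u⁻ ≠ 0 := norm_ne_zero_iff.mp (hpn ▸ hc)
  have hdecomp : T g - T h = ‖u⁺‖ • (T (‖u⁺‖⁻¹ • u⁺) - T (‖u⁻‖⁻¹ • u⁻)) := by
    have : u = ‖u⁺‖ • (‖u⁺‖⁻¹ • u⁺ - ‖u⁻‖⁻¹ • u⁻) := by
      rw [← hpn, ← smul_sub, smul_inv_smul₀ hc, posPart_sub_negPart]
    rw [← map_sub, ← map_sub, ← map_smul]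
    exact congrArg T this
  calc ‖T g - T h‖ = ‖u⁺‖ * ‖T (‖u⁺‖⁻¹ • u⁺) - T (‖u⁻‖⁻¹ • u⁻)‖ := by
        rw [hdecomp, norm_smul, norm_norm]
    _ ≤ ‖u⁺‖ * δ := by
        gcongr
        exact hT _ (inv_norm_smul_mem_density (posPart_nonneg u) hu0)
          _ (inv_norm_smul_mem_density (negPart_nonneg u) hu0')
    _ = δ / 2 * ‖g - h‖ := by rw [hu]; ring

end Density

lemma le_ciSup_iSup_iSup_of_le {α β γ L : Type*} [ConditionallyCompleteLattice L]
    {F : α → β → γ → L} {B : L} (hB : ∀ a b c, F a b c ≤ B) (a : α) (b : β) (c : γ) :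
    F a b c ≤ ⨆ a, ⨆ b, ⨆ c, F a b c := by
  have : Nonempty β := ⟨b⟩
  have : Nonempty γ := ⟨c⟩
  calc F a b c ≤ ⨆ c, F a b c := le_ciSup ⟨B, by rintro _ ⟨c, rfl⟩; exact hB a b c⟩ c
    _ ≤ ⨆ b, ⨆ c, F a b c :=
        le_ciSup ⟨B, by rintro _ ⟨b, rfl⟩; exact ciSup_le (hB a b)⟩ b
    _ ≤ ⨆ a, ⨆ b, ⨆ c, F a b c :=
        le_ciSup ⟨B, by rintro _ ⟨a, rfl⟩; exact ciSup_le fun b => ciSup_le (hB a b)⟩ a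

lemma tendsto_zero_of_submultiplicative {t : ℕ → ℝ} (h0 : ∀ n, 0 ≤ t n) (h1 : ∀ n, t n ≤ 1)
    (hmul : ∀ a b, t (a + b) ≤ t a * t b) {n : ℕ} (hn : n ≠ 0) (htn : t n < 1) :
    Tendsto t atTop (𝓝 0) := by
  have hpow : ∀ k, t (n * k) ≤ t n ^ k := by
    intro k
    induction k with
    | zero => simpa using h1 0
    | succ k ih =>
      calc t (n * (k + 1)) = t (n * k + n) := by rw [Nat.mul_succ]
        _ ≤ t (n * k) * t n := hmul _ _
        _ ≤ t n ^ k * t n := by gcongr; exact h0 n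
        _ = t n ^ (k + 1) := (pow_succ _ _).symm
  have hle : ∀ N, t N ≤ t n ^ (N / n) := fun N =>
    calc t N = t (n * (N / n) + N % n) := by rw [Nat.div_add_mod]
      _ ≤ t (n * (N / n)) * t (N % n) := hmul _ _
      _ ≤ t (n * (N / n)) := mul_le_of_le_one_right (h0 _) (h1 _)
      _ ≤ t n ^ (N / n) := hpow _
  exact squeeze_zero h0 hle
    ((tendsto_pow_atTop_nhds_zero_of_lt_one (h0 n) htn).comp (Nat.tendsto_div_const_atTop hn))

section Chain

variable {X : Type*} [MeasurableSpace X] {μ : Measure X} {Q : Lp ℝ 1 μ → Lp ℝ 1 μ → Lp ℝ 1 μ}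

lemma pchain_add (f g : Lp ℝ 1 μ) (a b : ℕ) :
    Pchain Q f (a + b) g = Pchain Q (Qiter Q a f) b (Pchain Q f a g) := by
  induction b with
  | zero => rfl
  | succ b ih =>
    change Q (Qiter Q (a + b) f) (Pchain Q f (a + b) g) = _
    rw [ih, Qiter, Nat.add_comm, Function.iterate_add_apply]
    rfl

lemma supDiff_nonneg (n : ℕ) : 0 ≤ supDiff μ Q n :=
  Real.iSup_nonneg fun _ => Real.iSup_nonneg fun _ => Real.iSup_nonneg fun _ => norm_nonneg _

lemma supDiff_le {n : ℕ} {B : ℝ} (hB : 0 ≤ B)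
    (h : ∀ f ∈ Density μ, ∀ g ∈ Density μ, ∀ g' ∈ Density μ,
      ‖Pchain Q f n g - Pchain Q f n g'‖ ≤ B) : supDiff μ Q n ≤ B :=
  Real.iSup_le (fun f => Real.iSup_le (fun g => Real.iSup_le
    (fun g' => h f f.2 g g.2 g' g'.2) hB) hB) hB

namespace IsQSO

variable (hQ : IsQSO μ Q)
include hQ

lemma qq_mem_density {f : Lp ℝ 1 μ} (hf : f ∈ Density μ) : QQ Q f ∈ Density μ :=
  ⟨hQ.nonneg f f hf.1 hf.1, by rw [QQ, hQ.norm_mul f f hf.1 hf.1, hf.2, one_mul]⟩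

lemma qiter_mem_density (n : ℕ) {f : Lp ℝ 1 μ} (hf : f ∈ Density μ) :
    Qiter Q n f ∈ Density μ := by
  induction n with
  | zero => exact hf
  | succ n ih =>
    rw [Qiter, Function.iterate_succ_apply']
    exact hQ.qq_mem_density ih

lemma pchain_mem_density (n : ℕ) {f g : Lp ℝ 1 μ} (hf : f ∈ Density μ)
    (hg : g ∈ Density μ) : Pchain Q f n g ∈ Density μ := by
  induction n with
  | zero => exact hg
  | succ n ih =>
    have hfn := hQ.qiter_mem_density n hf
    exact ⟨hQ.nonneg _ _ hfn.1 ih.1, by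
      rw [Pchain, hQ.norm_mul _ _ hfn.1 ih.1, hfn.2, ih.2, one_mul]⟩

lemma isLinearMap_pchain (f : Lp ℝ 1 μ) (n : ℕ) : IsLinearMap ℝ (Pchain Q f n) := by
  induction n with
  | zero => exact LinearMap.id.isLinear
  | succ n ih =>
    constructor
    · intro g g'
      simp only [Pchain, ih.map_add, hQ.add_right]
    · intro c g
      simp only [Pchain, ih.map_smul, hQ.smul_right]

lemma supDiff_le_two (n : ℕ) : supDiff μ Q n ≤ 2 :=
  supDiff_le zero_le_two fun _ hf _ hg _ hg' =>
    norm_sub_le_two_of_mem_density (hQ.pchain_mem_density n hf hg)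
      (hQ.pchain_mem_density n hf hg')

lemma norm_sub_le_supDiff (n : ℕ) {f g g' : Lp ℝ 1 μ} (hf : f ∈ Density μ)
    (hg : g ∈ Density μ) (hg' : g' ∈ Density μ) :
    ‖Pchain Q f n g - Pchain Q f n g'‖ ≤ supDiff μ Q n :=
  le_ciSup_iSup_iSup_of_le (F := fun (f g g' : Density μ) =>
      ‖Pchain Q (f : Lp ℝ 1 μ) n g - Pchain Q (f : Lp ℝ 1 μ) n g'‖)
    (fun f g g' => norm_sub_le_two_of_mem_density (hQ.pchain_mem_density n f.2 g.2)
      (hQ.pchain_mem_density n f.2 g'.2)) ⟨f, hf⟩ ⟨g, hg⟩ ⟨g', hg'⟩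

lemma supDiff_add_le (a b : ℕ) :
    supDiff μ Q (a + b) ≤ supDiff μ Q a * supDiff μ Q b / 2 := by
  refine supDiff_le (div_nonneg (mul_nonneg (supDiff_nonneg a) (supDiff_nonneg b)) zero_le_two)
    fun f hf g hg g' hg' => ?_
  rw [pchain_add, pchain_add]
  calc _ ≤ supDiff μ Q b / 2 * ‖Pchain Q f a g - Pchain Q f a g'‖ :=
        norm_map_sub_le_of_mem_density (IsLinearMap.mk' _ (hQ.isLinearMap_pchain _ b))
          (fun _ hp _ hq => hQ.norm_sub_le_supDiff b (hQ.qiter_mem_density a hf) hp hq)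
          (hQ.pchain_mem_density a hf hg) (hQ.pchain_mem_density a hf hg')
    _ ≤ supDiff μ Q b / 2 * supDiff μ Q a := by
        gcongr
        · exact div_nonneg (supDiff_nonneg b) zero_le_two
        · exact hQ.norm_sub_le_supDiff a hf hg hg'
    _ = supDiff μ Q a * supDiff μ Q b / 2 := by ring

end IsQSO

end Chain

theorem normQuasiMixing_eq_union_general {X : Type*} [MeasurableSpace X]
    (μ : Measure X) :
    {Q : Lp ℝ 1 μ → Lp ℝ 1 μ → Lp ℝ 1 μ | IsQSO μ Q ∧ NormQuasiMixing μ Q} =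
      ⋃ n ∈ {n : ℕ | 1 ≤ n},
        {Q : Lp ℝ 1 μ → Lp ℝ 1 μ → Lp ℝ 1 μ | IsQSO μ Q ∧ supDiff μ Q n < 2} := by
  ext Q
  simp only [Set.mem_iUnion, exists_prop]
  constructor
  · rintro ⟨hQ, hmix⟩
    obtain ⟨n, hn, hlt⟩ :=
      ((eventually_ge_atTop 1).and (hmix.eventually (gt_mem_nhds two_pos))).exists
    exact ⟨n, hn, hQ, hlt⟩
  · rintro ⟨n, hn, hQ, hlt⟩
    have hhalf : Tendsto (fun k => supDiff μ Q k / 2) atTop (𝓝 0) :=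
      tendsto_zero_of_submultiplicative (fun k => div_nonneg (supDiff_nonneg k) zero_le_two)
        (fun k => by linarith [hQ.supDiff_le_two k])
        (fun a b => by linarith [hQ.supDiff_add_le a b])
        (Nat.one_le_iff_ne_zero.mp hn) (by linarith)
    refine ⟨hQ, ?_⟩
    simpa [NormQuasiMixing, mul_div_cancel₀] using hhalf.const_mul 2

/-- The set `𝔔_nqm` of norm quasi-mixing QSOs equals the union over `n ≥ 1`
of the sets `{Q ∈ 𝔔 : sup_{f,g,h∈𝒟} ‖P_f^{[0,n]}(g) − P_f^{[0,n]}(h)‖₁ < 2}`. -/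
theorem normQuasiMixing_eq_union {X : Type*} [MeasurableSpace X]
    (μ : Measure X) [SigmaFinite μ] :
    {Q : Lp ℝ 1 μ → Lp ℝ 1 μ → Lp ℝ 1 μ | IsQSO μ Q ∧ NormQuasiMixing μ Q} =
      ⋃ n ∈ {n : ℕ | 1 ≤ n},
        {Q : Lp ℝ 1 μ → Lp ℝ 1 μ → Lp ℝ 1 μ | IsQSO μ Q ∧ supDiff μ Q n < 2} :=
  normQuasiMixing_eq_union_general μ
end

section
/- Let X = B₁ ∪ B₂ with B₁, B₂ disjoint measurable sets of positive finite measure, and fix h ∈ L¹ with h ≥ 0, ∫_{B₁} h dμ > 0, ∫_{B₂} h dμ > 0. Define Q(f,g) := (h·1_{B₁}/∫_{B₁}h dμ)·( ∫_{B₁}f dμ·∫_{B₁}g dμ + ∫_{B₁}f dμ·∫_{B₂}g dμ + ∫_{B₂}f dμ·∫_{B₁}g dμ ) + (h·1_{B₂}/∫_{B₂}h dμ)·∫_{B₂}f dμ·∫_{B₂}g dμ. Then Q is a quadratic stochastic operator, and for any densities f, g with supp f ⊆ B₂ and supp g ⊆ B₁ one has P_f^{[0,n]}(f) = h·1_{B₂}/∫_{B₂}h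 dμ and P_f^{[0,n]}(g) = h·1_{B₁}/∫_{B₁}h dμ for all n ≥ 1, so ‖P_f^{[0,n]}(f) − P_f^{[0,n]}(g)‖₁ = 2 for all n; hence Q is not norm quasi-mixing. -/
open MeasureTheory Filter Topology

section Aux
variable {X : Type*} [MeasurableSpace X] {μ : MeasureTheory.Measure X}

lemma setInt_add' (s : Set X) (φ ψ : Lp ℝ 1 μ) :
    ∫ a in s, (φ + ψ) a ∂μ = (∫ a in s, φ a ∂μ) + ∫ a in s, ψ a ∂μ := by
  rw [integral_congr_ae (ae_restrict_of_ae (Lp.coeFn_add φ ψ))]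
  exact integral_add (L1.integrable_coeFn φ).integrableOn (L1.integrable_coeFn ψ).integrableOn

lemma setInt_smul' (s : Set X) (c : ℝ) (φ : Lp ℝ 1 μ) :
    ∫ a in s, (c • φ) a ∂μ = c * ∫ a in s, φ a ∂μ := by
  rw [integral_congr_ae (ae_restrict_of_ae (Lp.coeFn_smul c φ))]
  simpa using integral_smul c (⇑φ)

lemma setInt_nonneg' (s : Set X) {φ : Lp ℝ 1 μ} (hφ : 0 ≤ φ) :
    0 ≤ ∫ a in s, φ a ∂μ :=
  integral_nonneg_of_ae (ae_restrict_of_ae ((Lp.coeFn_nonneg φ).mpr hφ))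

lemma norm_eq_int' {φ : Lp ℝ 1 μ} (hφ : 0 ≤ φ) : ‖φ‖ = ∫ a, φ a ∂μ := by
  rw [L1.norm_eq_integral_norm]
  refine integral_congr_ae ?_
  filter_upwards [(Lp.coeFn_nonneg φ).mpr hφ] with a ha
  simpa using abs_of_nonneg ha

lemma int_split' {B₁ B₂ : Set X} (hm₂ : MeasurableSet B₂)
    (hdisj : Disjoint B₁ B₂) (hcover : B₁ ∪ B₂ = Set.univ) (φ : Lp ℝ 1 μ) :
    ∫ a, φ a ∂μ = (∫ a in B₁, φ a ∂μ) + ∫ a in B₂, φ a ∂μ := by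
  rw [← setIntegral_univ, ← hcover,
    setIntegral_union hdisj hm₂ (L1.integrable_coeFn φ).integrableOn
      (L1.integrable_coeFn φ).integrableOn]
lemma smul_nonneg_Lp {c : ℝ} (hc : 0 ≤ c) {φ : Lp ℝ 1 μ} (hφ : 0 ≤ φ) : 0 ≤ c • φ := by
  rw [← Lp.coeFn_nonneg]
  filter_upwards [Lp.coeFn_smul c φ, (Lp.coeFn_nonneg φ).mpr hφ] with a h1 h2
  rw [h1]
  simpa using mul_nonneg hc h2

end Aux

/-- Let `X = B₁ ∪ B₂` with `B₁, B₂` disjoint measurable sets of positive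
finite measure, fix `h ∈ L¹`, `h ≥ 0`, with `∫_{B₁} h dμ > 0` and `∫_{B₂} h dμ > 0`, let
`u₁ = h·1_{B₁}/∫_{B₁}h dμ` and `u₂ = h·1_{B₂}/∫_{B₂}h dμ`, and define
`Q(f,g) = u₁·(∫_{B₁}f·∫_{B₁}g + ∫_{B₁}f·∫_{B₂}g + ∫_{B₂}f·∫_{B₁}g) + u₂·∫_{B₂}f·∫_{B₂}g`.
Then `Q` is a QSO, and for densities `f, g` with `supp f ⊆ B₂`, `supp g ⊆ B₁`,
`P_f^{[0,n]}(f) = u₂` and `P_f^{[0,n]}(g) = u₁` for all `n ≥ 1`, whence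
`‖P_f^{[0,n]}(f) − P_f^{[0,n]}(g)‖₁ = 2`; hence `Q` is not norm quasi-mixing. -/
theorem not_normQuasiMixing_example {X : Type*} [MeasurableSpace X]
    (μ : Measure X) [SigmaFinite μ]
    (B₁ B₂ : Set X) (hm₁ : MeasurableSet B₁) (hm₂ : MeasurableSet B₂)
    (hdisj : Disjoint B₁ B₂) (hcover : B₁ ∪ B₂ = Set.univ)
    (hB₁pos : 0 < μ B₁) (hB₁fin : μ B₁ < ⊤)
    (hB₂pos : 0 < μ B₂) (hB₂fin : μ B₂ < ⊤)
    (h : Lp ℝ 1 μ) (hh : 0 ≤ h)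
    (hi₁ : 0 < ∫ a in B₁, h a ∂μ) (hi₂ : 0 < ∫ a in B₂, h a ∂μ)
    (u₁ u₂ : Lp ℝ 1 μ)
    (hu₁ : (u₁ : X → ℝ) =ᵐ[μ] B₁.indicator (fun a => h a / ∫ a in B₁, h a ∂μ))
    (hu₂ : (u₂ : X → ℝ) =ᵐ[μ] B₂.indicator (fun a => h a / ∫ a in B₂, h a ∂μ))
    (Q : Lp ℝ 1 μ → Lp ℝ 1 μ → Lp ℝ 1 μ)
    (hQ : ∀ f g : Lp ℝ 1 μ, Q f g =
      ((∫ a in B₁, f a ∂μ) * (∫ a in B₁, g a ∂μ)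
        + (∫ a in B₁, f a ∂μ) * (∫ a in B₂, g a ∂μ)
        + (∫ a in B₂, f a ∂μ) * (∫ a in B₁, g a ∂μ)) • u₁
      + ((∫ a in B₂, f a ∂μ) * (∫ a in B₂, g a ∂μ)) • u₂)
    (f g : Lp ℝ 1 μ) (hf : f ∈ Density μ) (hg : g ∈ Density μ)
    (hfsupp : ∀ᵐ a ∂μ, a ∉ B₂ → f a = 0)
    (hgsupp : ∀ᵐ a ∂μ, a ∉ B₁ → g a = 0) :
    IsQSO μ Q ∧
    (∀ n : ℕ, 1 ≤ n →
      Pchain Q f n f = u₂ ∧ Pchain Q f n g = u₁ ∧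
        ‖Pchain Q f n f - Pchain Q f n g‖ = 2) ∧
    ¬ NormQuasiMixing μ Q := by
  -- basic facts
  obtain ⟨hf0, hfn⟩ := hf
  obtain ⟨hg0, hgn⟩ := hg
  have hhae : 0 ≤ᵐ[μ] ⇑h := (Lp.coeFn_nonneg h).mpr hh
  have hnormI : ∀ φ : Lp ℝ 1 μ, 0 ≤ φ →
      ‖φ‖ = (∫ a in B₁, φ a ∂μ) + ∫ a in B₂, φ a ∂μ := fun φ hφ => by
    rw [norm_eq_int' hφ, int_split' hm₂ hdisj hcover]
  -- u₁, u₂ facts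
  have hu₁0 : 0 ≤ u₁ := by
    rw [← Lp.coeFn_nonneg]
    filter_upwards [hu₁, hhae] with a ha hha
    rw [ha]
    exact Set.indicator_nonneg (fun x _ => div_nonneg hha hi₁.le) a
  have hu₂0 : 0 ≤ u₂ := by
    rw [← Lp.coeFn_nonneg]
    filter_upwards [hu₂, hhae] with a ha hha
    rw [ha]
    exact Set.indicator_nonneg (fun x _ => div_nonneg hha hi₂.le) a
  have hu₁B₁ : ∫ a in B₁, u₁ a ∂μ = 1 := by
    rw [integral_congr_ae (ae_restrict_of_ae hu₁), setIntegral_indicator hm₁,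
      Set.inter_self, integral_div]
    exact div_self hi₁.ne'
  have hu₁B₂ : ∫ a in B₂, u₁ a ∂μ = 0 := by
    rw [integral_congr_ae (ae_restrict_of_ae hu₁), setIntegral_indicator hm₁,
      Set.inter_comm, (Set.disjoint_iff_inter_eq_empty.mp hdisj), setIntegral_empty]
  have hu₂B₂ : ∫ a in B₂, u₂ a ∂μ = 1 := by
    rw [integral_congr_ae (ae_restrict_of_ae hu₂), setIntegral_indicator hm₂,
      Set.inter_self, integral_div]
    exact div_self hi₂.ne'
  have hu₂B₁ : ∫ a in B₁, u₂ a ∂μ = 0 := by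
    rw [integral_congr_ae (ae_restrict_of_ae hu₂), setIntegral_indicator hm₂,
      (Set.disjoint_iff_inter_eq_empty.mp hdisj), setIntegral_empty]
  -- f and g integrals
  have hfB₁ : ∫ a in B₁, f a ∂μ = 0 := by
    refine integral_eq_zero_of_ae ?_
    filter_upwards [ae_restrict_of_ae hfsupp, ae_restrict_mem hm₁] with a h1 h2
    exact h1 (fun hb => Set.disjoint_left.mp hdisj h2 hb)
  have hgB₂ : ∫ a in B₂, g a ∂μ = 0 := by
    refine integral_eq_zero_of_ae ?_
    filter_upwards [ae_restrict_of_ae hgsupp, ae_restrict_mem hm₂] with a h1 h2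
    exact h1 (fun hb => Set.disjoint_right.mp hdisj h2 hb)
  have hfB₂ : ∫ a in B₂, f a ∂μ = 1 := by
    have := hnormI f hf0; rw [hfn, hfB₁] at this; linarith
  have hgB₁ : ∫ a in B₁, g a ∂μ = 1 := by
    have := hnormI g hg0; rw [hgn, hgB₂] at this; linarith
  -- Q computations
  have Qff : Q f f = u₂ := by rw [hQ, hfB₁, hfB₂]; simp
  have Qfg : Q f g = u₁ := by rw [hQ, hfB₁, hfB₂, hgB₁, hgB₂]; simp
  have Quu : Q u₂ u₂ = u₂ := by rw [hQ, hu₂B₁, hu₂B₂]; simp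
  have Qu₂u₁ : Q u₂ u₁ = u₁ := by rw [hQ, hu₂B₁, hu₂B₂, hu₁B₁, hu₁B₂]; simp
  -- QSO structure
  have hQSO : IsQSO μ Q := by
    constructor
    · intro p p' q; rw [hQ, hQ, hQ, setInt_add' B₁, setInt_add' B₂]; module
    · intro c p q; rw [hQ, hQ, setInt_smul' B₁, setInt_smul' B₂]; module
    · intro p q q'; rw [hQ, hQ, hQ, setInt_add' B₁, setInt_add' B₂]; module
    · intro c p q; rw [hQ, hQ, setInt_smul' B₁, setInt_smul' B₂]; module
    · intro p q hp hq
      rw [hQ]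
      have i1p := setInt_nonneg' B₁ hp
      have i2p := setInt_nonneg' B₂ hp
      have i1q := setInt_nonneg' B₁ hq
      have i2q := setInt_nonneg' B₂ hq
      exact add_nonneg (smul_nonneg_Lp (by positivity) hu₁0) (smul_nonneg_Lp (by positivity) hu₂0)
    · intro p q; rw [hQ, hQ]; module
    · intro p q hp hq
      have i1p := setInt_nonneg' B₁ hp
      have i2p := setInt_nonneg' B₂ hp
      have i1q := setInt_nonneg' B₁ hq
      have i2q := setInt_nonneg' B₂ hq
      have h0 : 0 ≤ Q p q := by
        rw [hQ]
        exact add_nonneg (smul_nonneg_Lp (by positivity) hu₁0) (smul_nonneg_Lp (by positivity) hu₂0)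
      rw [hnormI _ h0, hnormI p hp, hnormI q hq, hQ, setInt_add' B₁, setInt_add' B₂,
        setInt_smul', setInt_smul', setInt_smul', setInt_smul',
        hu₁B₁, hu₁B₂, hu₂B₁, hu₂B₂]
      ring
  -- iterates
  have hQit : ∀ n : ℕ, Qiter Q (n + 1) f = u₂ := by
    intro n
    induction n with
    | zero => simpa [Qiter, QQ] using Qff
    | succ n ih =>
      rw [Qiter, Function.iterate_succ_apply']
      show Q _ _ = u₂
      rw [show (QQ Q)^[n+1] f = u₂ from ih, Quu]
  have hPf : ∀ n : ℕ, Pchain Q f (n + 1) f = u₂ := by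
    intro n
    induction n with
    | zero => simpa [Pchain, Qiter, QQ] using Qff
    | succ n ih => show Q (Qiter Q (n+1) f) (Pchain Q f (n+1) f) = u₂; rw [hQit, ih, Quu]
  have hPg : ∀ n : ℕ, Pchain Q f (n + 1) g = u₁ := by
    intro n
    induction n with
    | zero => simpa [Pchain, Qiter, QQ] using Qfg
    | succ n ih => show Q (Qiter Q (n+1) f) (Pchain Q f (n+1) g) = u₁; rw [hQit, ih, Qu₂u₁]
  -- the norm of the difference
  have hdiff : ‖u₂ - u₁‖ = 2 := by
    have key : ∀ᵐ a ∂μ, ‖(u₂ - u₁) a‖ = u₂ a + u₁ a := by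
      filter_upwards [Lp.coeFn_sub u₂ u₁, hu₁, hu₂, hhae] with a hsub h1 h2 hha
      rw [hsub, Pi.sub_apply, h1, h2, Real.norm_eq_abs]
      by_cases ha : a ∈ B₁
      · have ha2 : a ∉ B₂ := fun hb => Set.disjoint_left.mp hdisj ha hb
        rw [Set.indicator_of_mem ha, Set.indicator_of_notMem ha2]
        rw [zero_sub, abs_neg, abs_of_nonneg (div_nonneg hha hi₁.le)]
        ring
      · rw [Set.indicator_of_notMem ha, sub_zero]
        by_cases hb : a ∈ B₂
        · rw [Set.indicator_of_mem hb, abs_of_nonneg (div_nonneg hha hi₂.le)]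
          ring
        · rw [Set.indicator_of_notMem hb]
          simp
    rw [L1.norm_eq_integral_norm, integral_congr_ae key,
      integral_add (L1.integrable_coeFn u₂) (L1.integrable_coeFn u₁),
      int_split' hm₂ hdisj hcover u₂, int_split' hm₂ hdisj hcover u₁,
      hu₁B₁, hu₁B₂, hu₂B₁, hu₂B₂]
    norm_num
  refine ⟨hQSO, ?_, ?_⟩
  · rintro (_ | n) hn
    · omega
    · exact ⟨hPf n, hPg n, by rw [hPf n, hPg n, hdiff]⟩
  · -- not norm quasi-mixing
    have densQ : ∀ p q, p ∈ Density μ → q ∈ Density μ → Q p q ∈ Density μ := by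
      rintro p q ⟨hp0, hpn⟩ ⟨hq0, hqn⟩
      exact ⟨hQSO.nonneg p q hp0 hq0, by rw [hQSO.norm_mul p q hp0 hq0, hpn, hqn, one_mul]⟩
    have densIt : ∀ (n : ℕ) p, p ∈ Density μ → Qiter Q n p ∈ Density μ := by
      intro n
      induction n with
      | zero => intro p hp; exact hp
      | succ n ih =>
        intro p hp
        rw [Qiter, Function.iterate_succ_apply']
        exact densQ _ _ (ih p hp) (ih p hp)
    have densP : ∀ (n : ℕ) p q, p ∈ Density μ → q ∈ Density μ →
        Pchain Q p n q ∈ Density μ := by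
      intro n
      induction n with
      | zero => intro p q _ hq; exact hq
      | succ n ih =>
        intro p q hp hq
        exact densQ _ _ (densIt n p hp) (ih p q hp hq)
    have hbound : ∀ (n : ℕ) (p q r : Density μ),
        ‖Pchain Q (↑p) n (↑q) - Pchain Q (↑p) n (↑r)‖ ≤ 2 := by
      intro n p q r
      have h1 := (densP n p q p.2 q.2).2
      have h2 := (densP n p r p.2 r.2).2
      calc ‖Pchain Q (↑p) n (↑q) - Pchain Q (↑p) n (↑r)‖
          ≤ ‖Pchain Q (↑p) n (↑q)‖ + ‖Pchain Q (↑p) n (↑r)‖ := norm_sub_le _ _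
        _ ≤ 2 := by rw [h1, h2]; norm_num
    have hsup : ∀ n : ℕ, 1 ≤ n → 2 ≤ supDiff μ Q n := by
      rintro (_ | n) hn
      · omega
      have hF : f ∈ Density μ := ⟨hf0, hfn⟩
      have hG : g ∈ Density μ := ⟨hg0, hgn⟩
      have step1 : (2 : ℝ) ≤ ⨆ r : Density μ,
          ‖Pchain Q f (n+1) f - Pchain Q f (n+1) (↑r)‖ := by
        have hle := le_ciSup (f := fun r : Density μ =>
            ‖Pchain Q f (n+1) f - Pchain Q f (n+1) (↑r)‖)
          ⟨2, by rintro _ ⟨r, rfl⟩; exact hbound (n+1) ⟨f, hF⟩ ⟨f, hF⟩ r⟩ ⟨g, hG⟩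
        calc (2:ℝ) = ‖Pchain Q f (n+1) f - Pchain Q f (n+1) g‖ := by
              rw [hPf n, hPg n, hdiff]
          _ ≤ _ := hle
      have step2 : (2 : ℝ) ≤ ⨆ q : Density μ, ⨆ r : Density μ,
          ‖Pchain Q f (n+1) (↑q) - Pchain Q f (n+1) (↑r)‖ := by
        refine le_trans step1 (le_ciSup (f := fun q : Density μ => ⨆ r : Density μ,
          ‖Pchain Q f (n+1) (↑q) - Pchain Q f (n+1) (↑r)‖) ?_ ⟨f, hF⟩)
        refine ⟨2, ?_⟩
        rintro _ ⟨q, rfl⟩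
        exact Real.iSup_le (fun r => hbound (n+1) ⟨f, hF⟩ q r) (by norm_num)
      refine le_trans step2 (le_ciSup (f := fun p : Density μ =>
        ⨆ q : Density μ, ⨆ r : Density μ,
          ‖Pchain Q (↑p) (n+1) (↑q) - Pchain Q (↑p) (n+1) (↑r)‖) ?_ ⟨f, hF⟩)
      refine ⟨2, ?_⟩
      rintro _ ⟨p, rfl⟩
      exact Real.iSup_le (fun q => Real.iSup_le (fun r => hbound (n+1) p q r) (by norm_num))
        (by norm_num)
    intro hmix
    have hev : ∀ᶠ n : ℕ in atTop, supDiff μ Q n < 2 :=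
      hmix.eventually (gt_mem_nhds (by norm_num : (0:ℝ) < 2))
    obtain ⟨n, hn1, hn2⟩ := (hev.and (eventually_ge_atTop 1)).exists
    exact absurd (hsup n hn2) (not_le.mpr hn1)
end
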